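/- Let Σ ⊂ ℝⁿ be a compact smooth embedded k-dimensional submanifold without boundary and let p₀ ≠ q₀ be two points of Σ. Then there exists ε > 0 and a smooth chord shortening flow (p,q) : [0,ε) → Σ × Σ relative to Σ with p(0) = p₀ and q(0) = q₀. Moreover the solution is unique: any two chord shortening flows with the same initial data agree on the intersection of their domains of definition. -/

import Mathlib

/-!
Near a chord `(x, y)` of `S` the chord shortening field extends to a `C¹` field on `ℝⁿ × ℝⁿ`:
if `f` is a chart with `f (g z) = z` for a smooth local left inverse `g` (inverse function
theorem), then the projection onto `T z` is `L (L† L)⁻¹ L†` with `L = Df (g z)`, smooth in `z`.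
So the field is locally Lipschitz on the space of chords, and Grönwall's estimate together with
continuous induction give uniqueness. For existence, the flow written in the charts at both ends
of the chord is a smooth ODE; Picard–Lindelöf gives a solution, smooth by bootstrapping, and the
charts carry it back to a chord shortening flow on `S`.
-/

open scoped RealInnerProductSpace ENNReal
open Set Filter

noncomputable section

/-- Euclidean `n`-space. -/
abbrev Euc (n : ℕ) := EuclideanSpace ℝ (Fin n)

/-- The orthogonal projection `π_K` onto a submodule `K`, as a map `Euc n → Euc n`. -/
def projSM {n : ℕ} (K : Submodule ℝ (Euc n)) (v : Euc n) : Euc n :=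
  (K.orthogonalProjectionOnto v : Euc n)

/-- `S` is a smooth embedded `k`-dimensional submanifold (without boundary) of `ℝⁿ`,
whose tangent space at each `x ∈ S` is the `k`-dimensional subspace `T x ⊆ ℝⁿ`:
every point of `S` has a neighbourhood in `S` which is the image of a smooth injective
parametrization, which is a homeomorphism onto its image, with injective differential whose
range is the assigned tangent space. -/
def IsSubmanifold (n k : ℕ) (S : Set (Euc n)) (T : Euc n → Submodule ℝ (Euc n)) : Prop :=
  ∀ x ∈ S, ∃ (f : Euc k → Euc n) (u : Set (Euc k)) (v : Set (Euc n)),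
    IsOpen u ∧ IsOpen v ∧ x ∈ v ∧ ContDiffOn ℝ (⊤ : ℕ∞) f u ∧ Set.InjOn f u ∧
    f '' u = S ∩ v ∧
    (∀ s ⊆ u, IsOpen s → ∃ w : Set (Euc n), IsOpen w ∧ f '' s = S ∩ w) ∧
    ∀ y ∈ u, Function.Injective (fderiv ℝ f y) ∧
      LinearMap.range ((fderiv ℝ f y) : Euc k →ₗ[ℝ] Euc n) = T (f y)

/-- The tangential part `η^T(x) = π_{T x}((x - y)/|x - y|)` of the outward unit conormal at `x`
of the chord from `x` to `y`. -/
def conormalT {n : ℕ} (T : Euc n → Submodule ℝ (Euc n)) (x y : Euc n) : Euc n :=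
  projSM (T x) (‖x - y‖⁻¹ • (x - y))

/-- A chord shortening flow relative to `S` (with tangent spaces `T`) on the time domain `dom`:
a pair of C¹ curves `p q : dom → S` with `p t ≠ q t`, satisfying
`p' = -π_{p}((p-q)/|p-q|)` and `q' = -π_{q}((q-p)/|q-p|)`. -/
def IsCSFOn {n : ℕ} (S : Set (Euc n)) (T : Euc n → Submodule ℝ (Euc n))
    (dom : Set ℝ) (p q : ℝ → Euc n) : Prop :=
  ∀ t ∈ dom, p t ∈ S ∧ q t ∈ S ∧ p t ≠ q t ∧
    HasDerivWithinAt p (-(conormalT T (p t) (q t))) dom t ∧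
    HasDerivWithinAt q (-(conormalT T (q t) (p t))) dom t

/-- The time interval `[0, Tm)` (where possibly `Tm = ∞`). -/
def csfDomain (Tm : ℝ≥0∞) : Set ℝ := {t : ℝ | 0 ≤ t ∧ ENNReal.ofReal t < Tm}

/-- A maximal chord shortening flow: one defined on `[0, Tm)` which cannot be extended to a
chord shortening flow on a strictly larger interval `[0, Tm')`. -/
def IsMaximalCSF {n : ℕ} (S : Set (Euc n)) (T : Euc n → Submodule ℝ (Euc n))
    (Tm : ℝ≥0∞) (p q : ℝ → Euc n) : Prop :=
  IsCSFOn S T (csfDomain Tm) p q ∧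
  ∀ Tm' : ℝ≥0∞, Tm < Tm' → ∀ p' q' : ℝ → Euc n,
    IsCSFOn S T (csfDomain Tm') p' q' →
    ¬ (∀ t ∈ csfDomain Tm, p' t = p t ∧ q' t = q t)

open Topology

namespace ContinuousLinearMap

variable {E F : Type*} [NormedAddCommGroup E] [InnerProductSpace ℝ E] [FiniteDimensional ℝ E]
  [NormedAddCommGroup F] [InnerProductSpace ℝ F] [CompleteSpace F]

/-- The Moore–Penrose pseudo-inverse `(L† L)⁻¹ L†` of an injective `L`; `Ring.inverse` makes it
a total (and, at injective `L`, smooth) function of `L`. -/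
def pinv (L : E →L[ℝ] F) : F →L[ℝ] E :=
  Ring.inverse (adjoint L ∘L L) ∘L adjoint L

theorem isUnit_adjoint_comp_self {L : E →L[ℝ] F} (hL : Function.Injective L) :
    IsUnit (adjoint L ∘L L) := by
  have hinj : Function.Injective (adjoint L ∘L L) := by
    refine (injective_iff_map_eq_zero _).2 fun e he => hL ?_
    have : ⟪L e, L e⟫ = 0 := by
      rw [← adjoint_inner_left, ← comp_apply, he, inner_zero_left]
    rw [inner_self_eq_zero.1 this, map_zero]
  rw [isUnit_iff_bijective]
  exact ⟨hinj, LinearMap.injective_iff_surjective.1 hinj⟩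

theorem apply_pinv {L : E →L[ℝ] F} (hL : Function.Injective L) (w : F) :
    L (L.pinv w) = (LinearMap.range (L : E →ₗ[ℝ] F)).starProjection w := by
  have hnormal : adjoint L (L (L.pinv w)) = adjoint L w := by
    change ((adjoint L ∘L L) * Ring.inverse (adjoint L ∘L L)) (adjoint L w) = _
    rw [Ring.mul_inverse_cancel _ (isUnit_adjoint_comp_self hL)]
    rfl
  refine (Submodule.eq_starProjection_of_mem_of_inner_eq_zero
    (LinearMap.mem_range_self _ _) ?_).symm
  rintro _ ⟨e, rfl⟩
  rw [coe_coe, ← adjoint_inner_left, map_sub, hnormal, sub_self, inner_zero_left]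

theorem contDiffAt_pinv {L : E →L[ℝ] F} (hL : Function.Injective L) {n : WithTop ℕ∞} :
    ContDiffAt ℝ n pinv L := by
  have hadj : ContDiff ℝ n (fun M : E →L[ℝ] F => adjoint M) :=
    (adjoint : (E →L[ℝ] F) ≃ₗᵢ⋆[ℝ] (F →L[ℝ] E)).toContinuousLinearEquiv.contDiff
  have hgram : ContDiff ℝ n (fun M : E →L[ℝ] F => adjoint M ∘L M) := hadj.clm_comp contDiff_id
  obtain ⟨u, hu⟩ := isUnit_adjoint_comp_self hL
  have hinv : ContDiffAt ℝ n (fun M : E →L[ℝ] F => Ring.inverse (adjoint M ∘L M)) L :=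
    (hu ▸ contDiffAt_ringInverse ℝ u).comp (f := fun M : E →L[ℝ] F => adjoint M ∘L M) L
      hgram.contDiffAt
  exact hinv.clm_comp hadj.contDiffAt

end ContinuousLinearMap

section LeftInverse

variable {E F : Type*} [NormedAddCommGroup E] [InnerProductSpace ℝ E] [FiniteDimensional ℝ E]
  [NormedAddCommGroup F] [InnerProductSpace ℝ F] [CompleteSpace F]

theorem exists_continuousLinearEquiv_prod_orthogonal_range {L : E →L[ℝ] F}
    (hL : Function.Injective L) :
    ∃ D : (E × (LinearMap.range (L : E →ₗ[ℝ] F))ᗮ) ≃L[ℝ] F, ∀ p, D p = L p.1 + p.2 := by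
  set R := LinearMap.range (L : E →ₗ[ℝ] F)
  set D₀ : E × Rᗮ →L[ℝ] F :=
    L ∘L ContinuousLinearMap.fst ℝ E Rᗮ + Rᗮ.subtypeL ∘L ContinuousLinearMap.snd ℝ E Rᗮ
  have hinj : Function.Injective D₀ := by
    rw [injective_iff_map_eq_zero]
    rintro ⟨e, w⟩ h
    change L e + (w : F) = 0 at h
    have hLe : L e = 0 := by
      refine (Submodule.orthogonal_disjoint R).le_bot ⟨LinearMap.mem_range_self _ e, ?_⟩
      rw [eq_neg_of_add_eq_zero_left h]
      exact Rᗮ.neg_mem w.2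
    obtain rfl : e = 0 := hL (by rw [hLe, map_zero])
    simp only [map_zero, zero_add] at h
    exact Prod.ext rfl (Subtype.ext h)
  have hsurj : Function.Surjective D₀ := by
    intro z
    obtain ⟨e, he⟩ := LinearMap.mem_range.1 (R.starProjection_apply_mem z)
    refine ⟨(e, ⟨z - R.starProjection z, R.sub_starProjection_mem_orthogonal z⟩), ?_⟩
    change L e + (z - R.starProjection z) = z
    rw [← he, ContinuousLinearMap.coe_coe, add_sub_cancel]
  exact ⟨.ofBijective D₀ (LinearMap.ker_eq_bot.2 hinj) (LinearMap.range_eq_top.2 hsurj),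
    fun _ => rfl⟩

/-- The inverse function theorem for immersions: thickening `f` to `(b, w) ↦ f b + w` on
`E × (range f'(a))ᗮ` gives a local diffeomorphism, whose inverse followed by the first projection
is a smooth left inverse of `f`. -/
theorem ContDiffAt.exists_leftInverse {f : E → F} {a : E} {n : WithTop ℕ∞}
    (hf : ContDiffAt ℝ n f a) (hn : n ≠ 0) (hinj : Function.Injective (fderiv ℝ f a)) :
    ∃ g : F → E, ContDiffAt ℝ n g (f a) ∧ ∀ᶠ b in 𝓝 a, g (f b) = b := by
  set K := (LinearMap.range ((fderiv ℝ f a : E →L[ℝ] F) : E →ₗ[ℝ] F))ᗮ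
  obtain ⟨D, hD⟩ := exists_continuousLinearEquiv_prod_orthogonal_range hinj
  set φ : E × K → F := fun p => f p.1 + p.2
  have hφ : ContDiffAt ℝ n φ (a, 0) :=
    (hf.comp _ contDiffAt_fst).add (K.subtypeL.contDiff.comp contDiff_snd).contDiffAt
  have hφD : HasFDerivAt φ (D : E × K →L[ℝ] F) (a, 0) := by
    have : HasFDerivAt φ _ (a, 0) :=
      ((hf.differentiableAt hn).hasFDerivAt.comp (a, (0 : K)) hasFDerivAt_fst).add
        (K.subtypeL.hasFDerivAt.comp (a, (0 : K)) hasFDerivAt_snd)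
    exact this.congr_fderiv (ContinuousLinearMap.ext fun p => (hD p).symm)
  have hφa : φ (a, 0) = f a := add_zero _
  refine ⟨fun z => (hφ.localInverse hφD hn z).1, ?_, ?_⟩
  · exact contDiffAt_fst.comp _ (hφa ▸ hφ.to_localInverse hφD hn)
  · have hleft := (hφ.hasStrictFDerivAt' hφD hn).eventually_left_inverse
    have hcont : Continuous fun b : E => ((b, 0) : E × K) := continuous_id.prodMk continuous_const
    filter_upwards [hcont.tendsto a hleft] with b hb
    have : φ (b, 0) = f b := add_zero _
    rw [← this]
    exact congrArg Prod.fst hb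

end LeftInverse

section ODE

variable {E : Type*} [NormedAddCommGroup E] [NormedSpace ℝ E] {v : E → E} {s : Set E}
  {f g : ℝ → E} {a b : ℝ}

theorem IsIntegralCurveOn.hasDerivWithinAt_Ici (hf : IsIntegralCurveOn f (fun _ => v) (Ico a b))
    {t : ℝ} (ht : t ∈ Ico a b) : HasDerivWithinAt f (v (f t)) (Ici t) t :=
  (hf t ht).mono_of_mem_nhdsWithin (Ico_mem_nhdsGE_of_mem ht)

theorem ODE_solution_eventuallyEq_nhdsGE (hv : LocallyLipschitzOn s v)
    (hf : IsIntegralCurveOn f (fun _ => v) (Ico a b)) (hfs : MapsTo f (Ico a b) s)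
    (hg : IsIntegralCurveOn g (fun _ => v) (Ico a b)) (hgs : MapsTo g (Ico a b) s)
    {x : ℝ} (hx : x ∈ Ico a b) (hfg : f x = g x) : ∀ᶠ t in 𝓝[≥] x, f t = g t := by
  obtain ⟨K, N, hN, hlip⟩ := hv (hfs hx)
  have hnear : ∀ h : ℝ → E, IsIntegralCurveOn h (fun _ => v) (Ico a b) →
      MapsTo h (Ico a b) s → h x = f x → ∀ᶠ t in 𝓝[≥] x, h t ∈ N := by
    intro h hh hhs hhx
    have hcont : Tendsto h (𝓝[≥] x) (𝓝 (f x)) :=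
      hhx ▸ (hh x hx).continuousWithinAt.mono_of_mem_nhdsWithin (Ico_mem_nhdsGE_of_mem hx)
    refine (tendsto_nhdsWithin_iff.2 ⟨hcont, ?_⟩).eventually hN
    exact eventually_of_mem (Ico_mem_nhdsGE_of_mem hx) fun t ht => hhs ht
  obtain ⟨c, hxc, hc⟩ := mem_nhdsGE_iff_exists_Ico_subset.1 <|
    inter_mem (Ico_mem_nhdsGE hx.2) ((hnear f hf hfs rfl).and (hnear g hg hgs hfg.symm))
  obtain ⟨d, hxd, hdc⟩ := exists_between (mem_Ioi.1 hxc)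
  have hsub : Icc x d ⊆ Ico x c := Icc_subset_Ico_right hdc
  have hIcc : Icc x d ⊆ Ico a b := fun t ht => Ico_subset_Ico_left hx.1 (hc (hsub ht)).1
  have hmem : ∀ t ∈ Ico x d, t ∈ Ico a b ∧ f t ∈ N ∧ g t ∈ N := fun t ht =>
    ⟨hIcc (Ico_subset_Icc_self ht), (hc (hsub (Ico_subset_Icc_self ht))).2⟩
  have heq : EqOn f g (Icc x d) :=
    ODE_solution_unique_of_mem_Icc_right (v := fun _ => v) (s := fun _ => N) (fun _ _ => hlip)
      (hf.continuousOn.mono hIcc) (fun t ht => hf.hasDerivWithinAt_Ici (hmem t ht).1)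
      (fun t ht => (hmem t ht).2.1)
      (hg.continuousOn.mono hIcc) (fun t ht => hg.hasDerivWithinAt_Ici (hmem t ht).1)
      (fun t ht => (hmem t ht).2.2) hfg
  exact eventually_of_mem (Icc_mem_nhdsGE hxd) heq

theorem ODE_solution_unique_of_locallyLipschitzOn (hv : LocallyLipschitzOn s v)
    (hf : IsIntegralCurveOn f (fun _ => v) (Ico a b)) (hfs : MapsTo f (Ico a b) s)
    (hg : IsIntegralCurveOn g (fun _ => v) (Ico a b)) (hgs : MapsTo g (Ico a b) s)
    (ha : f a = g a) : EqOn f g (Ico a b) := by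
  intro t ht
  have hIcc : Icc a t ⊆ Ico a b := Icc_subset_Ico_right ht.2
  have hclosed : IsClosed ({u | f u = g u} ∩ Icc a t) := by
    rw [inter_comm]
    exact ((hf.continuousOn.mono hIcc).prodMk
      (hg.continuousOn.mono hIcc)).preimage_isClosed_of_isClosed isClosed_Icc isClosed_diagonal
  refine hclosed.Icc_subset_of_forall_mem_nhdsWithin ha (fun u hu => ?_) (right_mem_Icc.2 ht.1)
  have hu' : u ∈ Ico a b := Ico_subset_Ico_right ht.2.le hu.2
  exact nhdsWithin_mono _ Ioi_subset_Ici_self <|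
    ODE_solution_eventuallyEq_nhdsGE hv hf hfs hg hgs hu' hu.1

theorem exists_isIntegralCurveOn_Ioo_mapsTo [CompleteSpace E] {x₀ : E} {U : Set E}
    (hv : ContDiffAt ℝ 1 v x₀) (hU : U ∈ 𝓝 x₀) :
    ∃ ε > 0, ∃ α : ℝ → E, α 0 = x₀ ∧ IsIntegralCurveOn α (fun _ => v) (Ioo (-ε) ε) ∧
      MapsTo α (Ioo (-ε) ε) U := by
  obtain ⟨α, hα0, ε₀, hε₀, hα⟩ :=
    hv.exists_forall_mem_closedBall_exists_eq_forall_mem_Ioo_hasDerivAt₀ 0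
  rw [zero_sub, zero_add] at hα
  have hpre : α ⁻¹' U ∈ 𝓝 0 :=
    (hα 0 ⟨neg_lt_zero.2 hε₀, hε₀⟩).continuousAt.preimage_mem_nhds (hα0 ▸ hU)
  obtain ⟨δ, hδ, hδU⟩ := Metric.mem_nhds_iff.1 hpre
  rw [Real.ball_eq_Ioo, zero_sub, zero_add] at hδU
  have hsub : ∀ {r}, min ε₀ δ ≤ r → Ioo (-min ε₀ δ) (min ε₀ δ) ⊆ Ioo (-r) r :=
    fun h => Ioo_subset_Ioo (neg_le_neg h) h
  refine ⟨min ε₀ δ, lt_min hε₀ hδ, α, hα0, fun t ht => ?_, fun t ht => ?_⟩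
  · exact (hα t (hsub (min_le_left _ _) ht)).hasDerivWithinAt
  · exact hδU (hsub (min_le_right _ _) ht)

/-- Bootstrapping: if `α` is `C^m` then so is `α' = v ∘ α`. -/
theorem IsIntegralCurveOn.contDiffOn {α : ℝ → E} {I : Set ℝ} {U : Set E}
    (hα : IsIntegralCurveOn α (fun _ => v) I) (hI : UniqueDiffOn ℝ I)
    (hv : ContDiffOn ℝ (⊤ : ℕ∞) v U) (hαU : MapsTo α I U) : ContDiffOn ℝ (⊤ : ℕ∞) α I := by
  have hderiv : EqOn (derivWithin α I) (v ∘ α) I := fun t ht => (hα t ht).derivWithin (hI t ht)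
  refine contDiffOn_infty.2 fun m => ?_
  induction m with
  | zero => exact contDiffOn_zero.2 hα.continuousOn
  | succ m ih =>
    rw [Nat.cast_succ, contDiffOn_succ_iff_derivWithin hI]
    refine ⟨fun t ht => (hα t ht).differentiableWithinAt, by simp, ?_⟩
    exact ((hv.of_le (by exact_mod_cast le_top)).comp ih hαU).congr hderiv

end ODE

theorem ContDiffAt.clm_apply_norm_inv_smul {X E F : Type*} [NormedAddCommGroup X]
    [NormedSpace ℝ X] [NormedAddCommGroup E] [InnerProductSpace ℝ E] [NormedAddCommGroup F]
    [NormedSpace ℝ F] {P : X → E →L[ℝ] F} {c : X → E} {x : X} {m : WithTop ℕ∞}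
    (hP : ContDiffAt ℝ m P x) (hc : ContDiffAt ℝ m c x) (hcx : c x ≠ 0) :
    ContDiffAt ℝ m (fun z => P z (‖c z‖⁻¹ • c z)) x :=
  hP.clm_apply (((hc.norm ℝ hcx).inv (norm_ne_zero_iff.2 hcx)).smul hc)

def chordField {n : ℕ} (T : Euc n → Submodule ℝ (Euc n)) (z : Euc n × Euc n) : Euc n × Euc n :=
  (-conormalT T z.1 z.2, -conormalT T z.2 z.1)

def chordSpace {n : ℕ} (S : Set (Euc n)) : Set (Euc n × Euc n) :=
  {z | z.1 ∈ S ∧ z.2 ∈ S ∧ z.1 ≠ z.2}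

section Chord

variable {n k : ℕ} {S : Set (Euc n)} {T : Euc n → Submodule ℝ (Euc n)}

theorem IsCSFOn.isIntegralCurveOn {dom : Set ℝ} {p q : ℝ → Euc n} (h : IsCSFOn S T dom p q) :
    IsIntegralCurveOn (fun t => (p t, q t)) (fun _ => chordField T) dom :=
  fun t ht => (h t ht).2.2.2.1.prodMk (h t ht).2.2.2.2

theorem IsCSFOn.mapsTo_chordSpace {dom : Set ℝ} {p q : ℝ → Euc n} (h : IsCSFOn S T dom p q) :
    MapsTo (fun t => (p t, q t)) dom (chordSpace S) :=
  fun t ht => ⟨(h t ht).1, (h t ht).2.1, (h t ht).2.2.1⟩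

theorem IsCSFOn.mono {dom dom' : Set ℝ} {p q : ℝ → Euc n} (h : IsCSFOn S T dom p q)
    (hsub : dom' ⊆ dom) : IsCSFOn S T dom' p q := fun t ht =>
  have ⟨hp, hq, hpq, hp', hq'⟩ := h t (hsub ht)
  ⟨hp, hq, hpq, hp'.mono hsub, hq'.mono hsub⟩

theorem IsSubmanifold.exists_chart (hsub : IsSubmanifold n k S T) {x : Euc n} (hx : x ∈ S) :
    ∃ (f : Euc k → Euc n) (g : Euc n → Euc k) (u : Set (Euc k)),
      IsOpen u ∧ ContDiffOn ℝ (⊤ : ℕ∞) f u ∧ MapsTo f u S ∧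
      (∀ a ∈ u, Function.Injective (fderiv ℝ f a) ∧
        LinearMap.range ((fderiv ℝ f a) : Euc k →ₗ[ℝ] Euc n) = T (f a)) ∧
      ContDiffAt ℝ (⊤ : ℕ∞) g x ∧ ∀ᶠ z in 𝓝[S] x, g z ∈ u ∧ f (g z) = z := by
  obtain ⟨f, u, v, hu, -, hxv, hf, -, himg, hopen, hder⟩ := hsub x hx
  obtain ⟨a₀, ha₀, rfl⟩ : x ∈ f '' u := himg ▸ ⟨hx, hxv⟩
  obtain ⟨g, hg, hgf⟩ :=
    (hf.contDiffAt (hu.mem_nhds ha₀)).exists_leftInverse (by simp) (hder a₀ ha₀).1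
  obtain ⟨N, hNgf, hN, ha₀N⟩ := _root_.mem_nhds_iff.1 hgf
  obtain ⟨w, hw, hfw⟩ := hopen (u ∩ N) inter_subset_left (hu.inter hN)
  have hxw : f a₀ ∈ w := (hfw ▸ mem_image_of_mem f ⟨ha₀, ha₀N⟩ : f a₀ ∈ S ∩ w).2
  refine ⟨f, g, u, hu, hf, fun a ha => (himg ▸ mem_image_of_mem f ha : f a ∈ S ∩ v).1, hder, hg,
    ?_⟩
  filter_upwards [self_mem_nhdsWithin, mem_nhdsWithin_of_mem_nhds (hw.mem_nhds hxw)] with z hzS hzw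
  obtain ⟨b, hb, rfl⟩ : z ∈ f '' (u ∩ N) := hfw ▸ ⟨hzS, hzw⟩
  rw [show g (f b) = b from hNgf hb.2]
  exact ⟨hb.1, rfl⟩

theorem IsSubmanifold.exists_contDiffAt_eventuallyEq_projSM (hsub : IsSubmanifold n k S T)
    {x : Euc n} (hx : x ∈ S) :
    ∃ P : Euc n → Euc n →L[ℝ] Euc n, ContDiffAt ℝ 1 P x ∧
      ∀ᶠ z in 𝓝[S] x, ∀ w, P z w = projSM (T z) w := by
  obtain ⟨f, g, u, hu, hf, -, hder, hg, hgf⟩ := hsub.exists_chart hx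
  have hgx : g x ∈ u := (hgf.self_of_nhdsWithin hx).1
  have hdf : ContDiffAt ℝ 1 (fderiv ℝ f) (g x) :=
    ((contDiffOn_infty_iff_fderiv_of_isOpen hu).1 hf).2.contDiffAt (hu.mem_nhds hgx) |>.of_le
      (by exact_mod_cast le_top)
  refine ⟨fun z => fderiv ℝ f (g z) ∘L (fderiv ℝ f (g z)).pinv, ?_, ?_⟩
  · have hL : ContDiffAt ℝ 1 (fun z => fderiv ℝ f (g z)) x :=
      hdf.comp x (hg.of_le (by exact_mod_cast le_top))
    have hpinv : ContDiffAt ℝ 1 (fun z => (fderiv ℝ f (g z)).pinv) x :=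
      ContDiffAt.comp (g := ContinuousLinearMap.pinv) x
        (ContinuousLinearMap.contDiffAt_pinv (hder _ hgx).1) hL
    exact hL.clm_comp hpinv
  · filter_upwards [hgf] with z ⟨hzu, hfgz⟩ w
    calc _ = projSM (LinearMap.range ((fderiv ℝ f (g z)) : Euc k →ₗ[ℝ] Euc n)) w :=
          ContinuousLinearMap.apply_pinv (hder _ hzu).1 w
      _ = projSM (T z) w := by rw [(hder _ hzu).2, hfgz]

theorem IsSubmanifold.locallyLipschitzOn_chordField (hsub : IsSubmanifold n k S T) :
    LocallyLipschitzOn (chordSpace S) (chordField T) := by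
  rintro ⟨x, y⟩ ⟨hx, hy, hxy⟩
  obtain ⟨P, hP, hPT⟩ := hsub.exists_contDiffAt_eventuallyEq_projSM hx
  obtain ⟨Q, hQ, hQT⟩ := hsub.exists_contDiffAt_eventuallyEq_projSM hy
  set Φ : Euc n × Euc n → Euc n × Euc n := fun z =>
    (-P z.1 (‖z.1 - z.2‖⁻¹ • (z.1 - z.2)), -Q z.2 (‖z.2 - z.1‖⁻¹ • (z.2 - z.1)))
  have hΦ : ContDiffAt ℝ 1 Φ (x, y) :=
    ((hP.comp _ contDiffAt_fst).clm_apply_norm_inv_smul (contDiffAt_fst.sub contDiffAt_snd)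
      (sub_ne_zero.2 hxy)).neg.prodMk
    ((hQ.comp _ contDiffAt_snd).clm_apply_norm_inv_smul (contDiffAt_snd.sub contDiffAt_fst)
      (sub_ne_zero.2 hxy.symm)).neg
  obtain ⟨K, N, hN, hlip⟩ := hΦ.exists_lipschitzOnWith
  have hfst : Tendsto Prod.fst (𝓝[chordSpace S] (x, y)) (𝓝[S] x) :=
    tendsto_nhdsWithin_iff.2 ⟨(continuous_fst.tendsto _).mono_left nhdsWithin_le_nhds,
      eventually_mem_nhdsWithin.mono fun z hz => hz.1⟩
  have hsnd : Tendsto Prod.snd (𝓝[chordSpace S] (x, y)) (𝓝[S] y) :=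
    tendsto_nhdsWithin_iff.2 ⟨(continuous_snd.tendsto _).mono_left nhdsWithin_le_nhds,
      eventually_mem_nhdsWithin.mono fun z hz => hz.2.1⟩
  have hΦT : ∀ᶠ z in 𝓝[chordSpace S] (x, y), chordField T z = Φ z := by
    filter_upwards [hfst.eventually hPT, hsnd.eventually hQT] with z hzP hzQ
    simp only [chordField, conormalT, Φ, hzP, hzQ]
  exact ⟨K, N ∩ {z | chordField T z = Φ z}, inter_mem (mem_nhdsWithin_of_mem_nhds hN) hΦT,
    fun z hz w hw => by rw [hz.2, hw.2]; exact hlip hz.1 hw.1⟩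

theorem IsSubmanifold.isCSFOn_unique (hsub : IsSubmanifold n k S T) {ε : ℝ}
    {p₁ q₁ p₂ q₂ : ℝ → Euc n} (h₁ : IsCSFOn S T (Ico 0 ε) p₁ q₁)
    (h₂ : IsCSFOn S T (Ico 0 ε) p₂ q₂) (hp : p₁ 0 = p₂ 0) (hq : q₁ 0 = q₂ 0) :
    ∀ t ∈ Ico 0 ε, p₁ t = p₂ t ∧ q₁ t = q₂ t := fun _ ht =>
  Prod.mk.inj <| ODE_solution_unique_of_locallyLipschitzOn hsub.locallyLipschitzOn_chordField
    h₁.isIntegralCurveOn h₁.mapsTo_chordSpace h₂.isIntegralCurveOn h₂.mapsTo_chordSpace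
    (Prod.ext hp hq) ht

/-- `chordField T` pulled back by the charts `f` and `f'` at the two ends of the chord;
`(fderiv ℝ f a).pinv` inverts the differential on its range, the tangent space. -/
def chordFieldInCharts (f f' : Euc k → Euc n) (z : Euc k × Euc k) : Euc k × Euc k :=
  (-(fderiv ℝ f z.1).pinv (‖f z.1 - f' z.2‖⁻¹ • (f z.1 - f' z.2)),
    -(fderiv ℝ f' z.2).pinv (‖f' z.2 - f z.1‖⁻¹ • (f' z.2 - f z.1)))

theorem hasDerivAt_comp_of_hasDerivAt_pinv {f : Euc k → Euc n} {c : ℝ → Euc k} {t : ℝ}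
    {y : Euc n} (hf : DifferentiableAt ℝ f (c t))
    (hder : Function.Injective (fderiv ℝ f (c t)) ∧
      LinearMap.range ((fderiv ℝ f (c t)) : Euc k →ₗ[ℝ] Euc n) = T (f (c t)))
    (hc : HasDerivAt c (-(fderiv ℝ f (c t)).pinv (‖f (c t) - y‖⁻¹ • (f (c t) - y))) t) :
    HasDerivAt (fun s => f (c s)) (-conormalT T (f (c t)) y) t := by
  have h := hf.hasFDerivAt.comp_hasDerivAt t hc
  rw [map_neg, ContinuousLinearMap.apply_pinv hder.1] at h
  rw [conormalT, ← hder.2]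
  exact h

theorem contDiffOn_chordFieldInCharts {f f' : Euc k → Euc n} {u u' : Set (Euc k)}
    (hu : IsOpen u) (hu' : IsOpen u') (hf : ContDiffOn ℝ (⊤ : ℕ∞) f u)
    (hf' : ContDiffOn ℝ (⊤ : ℕ∞) f' u') (hinj : ∀ a ∈ u, Function.Injective (fderiv ℝ f a))
    (hinj' : ∀ b ∈ u', Function.Injective (fderiv ℝ f' b)) :
    ContDiffOn ℝ (⊤ : ℕ∞) (chordFieldInCharts f f')
      (u ×ˢ u' ∩ (fun z => (f z.1, f' z.2)) ⁻¹' (diagonal (Euc n))ᶜ) := by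
  rintro ⟨a, b⟩ ⟨⟨ha, hb⟩, hab⟩
  have hfa := (hf.contDiffAt (hu.mem_nhds ha)).comp (a, b) contDiffAt_fst
  have hfb := (hf'.contDiffAt (hu'.mem_nhds hb)).comp (a, b) contDiffAt_snd
  have hdf := ((contDiffOn_infty_iff_fderiv_of_isOpen hu).1 hf).2.contDiffAt (hu.mem_nhds ha)
  have hdf' := ((contDiffOn_infty_iff_fderiv_of_isOpen hu').1 hf').2.contDiffAt (hu'.mem_nhds hb)
  refine ContDiffAt.contDiffWithinAt (ContDiffAt.prodMk ?_ ?_) <;> refine ContDiffAt.neg ?_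
  · refine ContDiffAt.clm_apply_norm_inv_smul ?_ (hfa.sub hfb) (sub_ne_zero.2 hab)
    exact ContDiffAt.comp (g := ContinuousLinearMap.pinv) (a, b)
      (ContinuousLinearMap.contDiffAt_pinv (hinj a ha)) (hdf.comp (a, b) contDiffAt_fst)
  · refine ContDiffAt.clm_apply_norm_inv_smul ?_ (hfb.sub hfa) (sub_ne_zero.2 (Ne.symm hab))
    exact ContDiffAt.comp (g := ContinuousLinearMap.pinv) (a, b)
      (ContinuousLinearMap.contDiffAt_pinv (hinj' b hb)) (hdf'.comp (a, b) contDiffAt_snd)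

theorem IsSubmanifold.exists_isCSFOn (hsub : IsSubmanifold n k S T) {p₀ q₀ : Euc n}
    (hp₀ : p₀ ∈ S) (hq₀ : q₀ ∈ S) (hne : p₀ ≠ q₀) :
    ∃ ε : ℝ, 0 < ε ∧ ∃ p q : ℝ → Euc n,
      IsCSFOn S T (Ico 0 ε) p q ∧ p 0 = p₀ ∧ q 0 = q₀ ∧
      ContDiffOn ℝ (⊤ : ℕ∞) p (Ico 0 ε) ∧ ContDiffOn ℝ (⊤ : ℕ∞) q (Ico 0 ε) := by
  obtain ⟨f, g, u, hu, hf, hfS, hder, -, hgf⟩ := hsub.exists_chart hp₀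
  obtain ⟨f', g', u', hu', hf', hfS', hder', -, hgf'⟩ := hsub.exists_chart hq₀
  obtain ⟨ha₀, hfa₀⟩ := hgf.self_of_nhdsWithin hp₀
  obtain ⟨hb₀, hfb₀⟩ := hgf'.self_of_nhdsWithin hq₀
  set U := u ×ˢ u' ∩ (fun z => (f z.1, f' z.2)) ⁻¹' (diagonal (Euc n))ᶜ
  have hU : IsOpen U :=
    ((hf.continuousOn.comp continuousOn_fst fun _ h => h.1).prodMk
      (hf'.continuousOn.comp continuousOn_snd fun _ h => h.2)).isOpen_inter_preimage
      (hu.prod hu') isClosed_diagonal.isOpen_compl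
  have hz₀ : (g p₀, g' q₀) ∈ U := ⟨⟨ha₀, hb₀⟩, show f (g p₀) ≠ f' (g' q₀) by rwa [hfa₀, hfb₀]⟩
  have hW := contDiffOn_chordFieldInCharts hu hu' hf hf' (fun a ha => (hder a ha).1)
    (fun b hb => (hder' b hb).1)
  obtain ⟨ε, hε, α, hα0, hα, hαU⟩ := exists_isIntegralCurveOn_Ioo_mapsTo
    ((hW.contDiffAt (hU.mem_nhds hz₀)).of_le (by exact_mod_cast le_top)) (hU.mem_nhds hz₀)
  have hαsmooth := hα.contDiffOn (uniqueDiffOn_Ioo _ _) hW hαU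
  have hIco : Ico 0 ε ⊆ Ioo (-ε) ε := Ico_subset_Ioo_left (neg_lt_zero.2 hε)
  refine ⟨ε, hε, fun t => f (α t).1, fun t => f' (α t).2, fun t ht => ?_,
    show f (α 0).1 = p₀ by rw [hα0, hfa₀], show f' (α 0).2 = q₀ by rw [hα0, hfb₀], ?_, ?_⟩
  · obtain ⟨⟨ha, hb⟩, hab⟩ := hαU (hIco ht)
    have hαt := (hα t (hIco ht)).hasDerivAt (isOpen_Ioo.mem_nhds (hIco ht))
    have hα₁ : HasDerivAt (fun s => (α s).1) (chordFieldInCharts f f' (α t)).1 t :=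
      (ContinuousLinearMap.fst ℝ (Euc k) (Euc k)).hasFDerivAt.comp_hasDerivAt t hαt
    have hα₂ : HasDerivAt (fun s => (α s).2) (chordFieldInCharts f f' (α t)).2 t :=
      (ContinuousLinearMap.snd ℝ (Euc k) (Euc k)).hasFDerivAt.comp_hasDerivAt t hαt
    refine ⟨hfS ha, hfS' hb, hab, HasDerivAt.hasDerivWithinAt ?_, HasDerivAt.hasDerivWithinAt ?_⟩
    · exact hasDerivAt_comp_of_hasDerivAt_pinv
        ((hf.contDiffAt (hu.mem_nhds ha)).differentiableAt (by simp)) (hder _ ha) hα₁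
    · exact hasDerivAt_comp_of_hasDerivAt_pinv
        ((hf'.contDiffAt (hu'.mem_nhds hb)).differentiableAt (by simp)) (hder' _ hb) hα₂
  · exact (hf.comp (contDiff_fst.comp_contDiffOn hαsmooth) fun t ht => (hαU ht).1.1).mono hIco
  · exact (hf'.comp (contDiff_snd.comp_contDiffOn hαsmooth) fun t ht => (hαU ht).1.2).mono hIco

end Chord

theorem chord_statement_2_general (n k : ℕ) (S : Set (Euc n)) (T : Euc n → Submodule ℝ (Euc n))
    (hsub : IsSubmanifold n k S T)
    (p₀ q₀ : Euc n) (hp₀ : p₀ ∈ S) (hq₀ : q₀ ∈ S) (hne : p₀ ≠ q₀) :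
    (∃ ε : ℝ, 0 < ε ∧ ∃ p q : ℝ → Euc n,
      IsCSFOn S T (Set.Ico 0 ε) p q ∧ p 0 = p₀ ∧ q 0 = q₀ ∧
      ContDiffOn ℝ (⊤ : ℕ∞) p (Set.Ico 0 ε) ∧ ContDiffOn ℝ (⊤ : ℕ∞) q (Set.Ico 0 ε)) ∧
    ∀ (ε₁ ε₂ : ℝ) (p₁ q₁ p₂ q₂ : ℝ → Euc n),
      IsCSFOn S T (Set.Ico 0 ε₁) p₁ q₁ → IsCSFOn S T (Set.Ico 0 ε₂) p₂ q₂ →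
      p₁ 0 = p₀ → q₁ 0 = q₀ → p₂ 0 = p₀ → q₂ 0 = q₀ →
      ∀ t ∈ Set.Ico 0 ε₁ ∩ Set.Ico 0 ε₂, p₁ t = p₂ t ∧ q₁ t = q₂ t := by
  refine ⟨hsub.exists_isCSFOn hp₀ hq₀ hne, fun ε₁ ε₂ p₁ q₁ p₂ q₂ h₁ h₂ hp₁ hq₁ hp₂ hq₂ => ?_⟩
  rw [Ico_inter_Ico, max_self]
  exact hsub.isCSFOn_unique (h₁.mono (Ico_subset_Ico_right (min_le_left _ _)))
    (h₂.mono (Ico_subset_Ico_right (min_le_right _ _))) (hp₁.trans hp₂.symm) (hq₁.trans hq₂.symm)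

/-- **Short-time existence and uniqueness** of the chord shortening flow with given initial
chord, relative to a compact smooth embedded submanifold `S ⊆ ℝⁿ`. -/
theorem chord_statement_2 (n k : ℕ) (S : Set (Euc n)) (T : Euc n → Submodule ℝ (Euc n))
    (hsub : IsSubmanifold n k S T) (hcpt : IsCompact S)
    (p₀ q₀ : Euc n) (hp₀ : p₀ ∈ S) (hq₀ : q₀ ∈ S) (hne : p₀ ≠ q₀) :
    (∃ ε : ℝ, 0 < ε ∧ ∃ p q : ℝ → Euc n,
      IsCSFOn S T (Set.Ico 0 ε) p q ∧ p 0 = p₀ ∧ q 0 = q₀ ∧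
      ContDiffOn ℝ (⊤ : ℕ∞) p (Set.Ico 0 ε) ∧ ContDiffOn ℝ (⊤ : ℕ∞) q (Set.Ico 0 ε)) ∧
    ∀ (ε₁ ε₂ : ℝ) (p₁ q₁ p₂ q₂ : ℝ → Euc n),
      IsCSFOn S T (Set.Ico 0 ε₁) p₁ q₁ → IsCSFOn S T (Set.Ico 0 ε₂) p₂ q₂ →
      p₁ 0 = p₀ → q₁ 0 = q₀ → p₂ 0 = p₀ → q₂ 0 = q₀ →
      ∀ t ∈ Set.Ico 0 ε₁ ∩ Set.Ico 0 ε₂, p₁ t = p₂ t ∧ q₁ t = q₂ t :=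
  chord_statement_2_general n k S T hsub p₀ q₀ hp₀ hq₀ hne
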